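/- For every r ≥ 0 and all y, y' ∈ ℝ: ∫_0^r ∫_ℝ G_{r−r₀}(y−y₀) · G_{r−r₀}(y'−y₀) dy₀ dr₀ ≤ r² · G_{2r}(y−y'). -/

import Mathlib

open MeasureTheory

/-- `G_t(x)`, the fundamental solution of the wave equation on `ℝ₊ × ℝ`:
`G_t(x) = 1/2` if `|x| < t`, and `0` otherwise (in particular `G_t ≡ 0` for `t ≤ 0`). -/
noncomputable def waveG (t x : ℝ) : ℝ := if |x| < t then 1 / 2 else 0

lemma waveG_nonneg (t x : ℝ) : 0 ≤ waveG t x := by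
  unfold waveG; split <;> norm_num

lemma waveG_le (t x : ℝ) : waveG t x ≤ 1 / 2 := by
  unfold waveG; split <;> norm_num

lemma waveG_eq_indicator (t c : ℝ) (y₀ : ℝ) :
    waveG t (c - y₀) = Set.indicator (Set.Ioo (c - t) (c + t)) (fun _ => (1:ℝ)/2) y₀ := by
  unfold waveG
  by_cases h : |c - y₀| < t
  · have hm : y₀ ∈ Set.Ioo (c - t) (c + t) := by
      rw [abs_lt] at h
      exact ⟨by linarith [h.1], by linarith [h.2]⟩
    rw [if_pos h, Set.indicator_of_mem hm]
  · have hm : y₀ ∉ Set.Ioo (c - t) (c + t) := by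
      intro hm
      obtain ⟨h1, h2⟩ := hm
      exact h (by rw [abs_lt]; constructor <;> linarith)
    rw [if_neg h, Set.indicator_of_notMem hm]

lemma integrable_waveG (t c : ℝ) :
    Integrable (fun y₀ : ℝ => waveG t (c - y₀)) := by
  have : (fun y₀ : ℝ => waveG t (c - y₀))
      = Set.indicator (Set.Ioo (c - t) (c + t)) (fun _ => (1:ℝ)/2) := by
    funext y₀; exact waveG_eq_indicator t c y₀
  rw [this, integrable_indicator_iff measurableSet_Ioo]
  exact integrableOn_const measure_Ioo_lt_top.ne (by simp)

lemma integral_waveG (t c : ℝ) (ht : 0 ≤ t) :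
    ∫ y₀ : ℝ, waveG t (c - y₀) = t := by
  have : (fun y₀ : ℝ => waveG t (c - y₀))
      = Set.indicator (Set.Ioo (c - t) (c + t)) (fun _ => (1:ℝ)/2) := by
    funext y₀; exact waveG_eq_indicator t c y₀
  rw [this, integral_indicator measurableSet_Ioo, setIntegral_const, measureReal_def,
    Real.volume_Ioo]
  rw [ENNReal.toReal_ofReal (by linarith), smul_eq_mul]
  ring

theorem stmt14 (r : ℝ) (hr : 0 ≤ r) (y y' : ℝ) :
    (∫ r₀ in (0 : ℝ)..r, ∫ y₀ : ℝ, waveG (r - r₀) (y - y₀) * waveG (r - r₀) (y' - y₀))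
      ≤ r ^ 2 * waveG (2 * r) (y - y') := by
  by_cases hd : |y - y'| < 2 * r
  · -- RHS = r²/2
    have hRHS : waveG (2 * r) (y - y') = 1 / 2 := by unfold waveG; rw [if_pos hd]
    rw [hRHS]
    -- bound the inner integral by r/2 for r₀ ∈ (0, r]
    have key : ∀ r₀ ∈ Set.uIoc (0:ℝ) r,
        ‖∫ y₀ : ℝ, waveG (r - r₀) (y - y₀) * waveG (r - r₀) (y' - y₀)‖ ≤ r / 2 := by
      intro r₀ hr₀
      rw [Set.uIoc_of_le hr] at hr₀
      obtain ⟨h0, h1⟩ := hr₀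
      set t := r - r₀ with ht
      have htnn : 0 ≤ t := by simp [ht]; linarith
      have hbound : ‖∫ y₀ : ℝ, waveG t (y - y₀) * waveG t (y' - y₀)‖
          ≤ ∫ y₀ : ℝ, waveG t (y - y₀) * (1 / 2) := by
        apply norm_integral_le_of_norm_le ((integrable_waveG t y).mul_const _)
        filter_upwards with y₀
        rw [Real.norm_eq_abs, abs_of_nonneg (mul_nonneg (waveG_nonneg _ _) (waveG_nonneg _ _))]
        exact mul_le_mul_of_nonneg_left (waveG_le _ _) (waveG_nonneg _ _)
      have hval : ∫ y₀ : ℝ, waveG t (y - y₀) * (1 / 2) = t / 2 := by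
        rw [integral_mul_const, integral_waveG t y htnn]; ring
      rw [hval] at hbound
      calc ‖∫ y₀ : ℝ, waveG t (y - y₀) * waveG t (y' - y₀)‖ ≤ t / 2 := hbound
        _ ≤ r / 2 := by simp [ht]; linarith
    have := intervalIntegral.norm_integral_le_of_norm_le_const key
    have h2 : (∫ r₀ in (0:ℝ)..r, ∫ y₀ : ℝ, waveG (r - r₀) (y - y₀) * waveG (r - r₀) (y' - y₀))
        ≤ r / 2 * |r - 0| := le_trans (le_abs_self _) this
    rw [abs_of_nonneg (by linarith : (0:ℝ) ≤ r - 0)] at h2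
    calc _ ≤ r / 2 * (r - 0) := h2
      _ = r ^ 2 * (1 / 2) := by ring
  · -- integrand is identically zero on [0, r]
    push_neg at hd
    have hzero : ∀ r₀ ∈ Set.uIcc (0:ℝ) r,
        (∫ y₀ : ℝ, waveG (r - r₀) (y - y₀) * waveG (r - r₀) (y' - y₀)) = (0:ℝ) := by
      intro r₀ hr₀
      rw [Set.uIcc_of_le hr] at hr₀
      have : ∀ y₀ : ℝ, waveG (r - r₀) (y - y₀) * waveG (r - r₀) (y' - y₀) = 0 := by
        intro y₀
        unfold waveG
        by_cases h1 : |y - y₀| < r - r₀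
        · by_cases h2 : |y' - y₀| < r - r₀
          · exfalso
            have : |y - y'| ≤ |y - y₀| + |y' - y₀| := by
              have : y - y' = (y - y₀) - (y' - y₀) := by ring
              rw [this]
              exact (abs_sub _ _)
            have hr₀0 : 0 ≤ r₀ := hr₀.1
            linarith
          · rw [if_neg h2, mul_zero]
        · rw [if_neg h1, zero_mul]
      simp only [this, integral_zero]
    have : (∫ r₀ in (0:ℝ)..r, ∫ y₀ : ℝ, waveG (r - r₀) (y - y₀) * waveG (r - r₀) (y' - y₀))
        = ∫ r₀ in (0:ℝ)..r, (0:ℝ) := by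
      apply intervalIntegral.integral_congr
      intro r₀ hr₀
      exact hzero r₀ hr₀
    rw [this, intervalIntegral.integral_zero]
    exact mul_nonneg (by positivity) (waveG_nonneg _ _)
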